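/- In the MDP of Example 5.1 with cost c(x,a) = -1 for x ≥ 1 and c(0,a) = 0, the optimal value is v*(1) = -4, but the stationary strategy φ(x) ≡ 2 achieves only v^φ(1) = -Σ_{t=0}^∞ (1/2)^t = -2. -/

import Mathlib

/-- Transition kernel of the MDP of Example 5.1 on state space `ℕ` with actions `{1,2}`:
`0` is absorbing; action `1`: `p(0|x,1) = 2^{-x}`, `p(x|x,1) = 1 - 2^{-x}`;
action `2`: `p(0|x,2) = 1/2`, `p(x+1|x,2) = 1/2`. -/
noncomputable def Pkernel (a x y : ℕ) : ℝ :=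
  if x = 0 then (if y = 0 then 1 else 0)
  else if a = 1 then
    (if y = 0 then (1/2 : ℝ)^x else if y = x then 1 - (1/2 : ℝ)^x else 0)
  else (if y = 0 then (1/2 : ℝ) else if y = x + 1 then (1/2 : ℝ) else 0)

/-- A history is a list of (action, resulting state) pairs, most recent first.
`curState x₀ h` is the current state after history `h` starting from `x₀`. -/
def curState (x₀ : ℕ) : List (ℕ × ℕ) → ℕ
  | [] => x₀
  | (_, y) :: _ => y

/-- A (randomized, history-dependent) strategy assigns to the initial state and a history
a probability distribution over actions; `σ x₀ h a` is the probability of action `a`. -/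
def IsStrategy (σ : ℕ → List (ℕ × ℕ) → ℕ → ℝ) : Prop :=
  ∀ x₀ h, (∀ a, 0 ≤ σ x₀ h a) ∧ σ x₀ h 1 + σ x₀ h 2 = 1
    ∧ ∀ a, a ≠ 1 → a ≠ 2 → σ x₀ h a = 0

/-- Probability that the controlled process under `σ` started at `x₀` realizes the
trajectory recorded by the history `h` (most recent pair first). -/
noncomputable def trajProb (σ : ℕ → List (ℕ × ℕ) → ℕ → ℝ) (x₀ : ℕ) :
    List (ℕ × ℕ) → ℝ
  | [] => 1
  | (a, y) :: h => trajProb σ x₀ h * σ x₀ h a * Pkernel a (curState x₀ h) y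

/-- `Pne σ x₀ t`: probability that under strategy `σ` started at `x₀` the state at time `t`
is nonzero, i.e. `P^σ_{x₀}(X_t ≠ 0) = P^σ_{x₀}(T₀ > t)`. -/
noncomputable def Pne (σ : ℕ → List (ℕ × ℕ) → ℕ → ℝ) (x₀ t : ℕ) : ℝ :=
  ∑' h : {h : List (ℕ × ℕ) // h.length = t ∧ curState x₀ h ≠ 0}, trajProb σ x₀ h.1

/-- Expected hitting time of `0`: `E^σ_{x₀}[T₀] = ∑_{t=0}^∞ P^σ_{x₀}(T₀ > t)`. -/
noncomputable def hittingE (σ : ℕ → List (ℕ × ℕ) → ℕ → ℝ) (x₀ : ℕ) : ℝ :=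
  ∑' t : ℕ, Pne σ x₀ t

/-- Total expected cost `v^σ(x₀) = E^σ_{x₀}[∑_{t=1}^∞ c(X_{t-1}, A_t)]` for the cost
`c(x,a) = -1` for `x ≥ 1`, `c(0,a) = 0`: it equals `∑_{t=0}^∞ (-P^σ_{x₀}(X_t ≠ 0))`. -/
noncomputable def costValue (σ : ℕ → List (ℕ × ℕ) → ℕ → ℝ) (x₀ : ℕ) : ℝ :=
  ∑' t : ℕ, -(Pne σ x₀ t)

/-- The stationary strategy `φ(x) ≡ 2`, always taking action `2`. -/
noncomputable def sigma2 : ℕ → List (ℕ × ℕ) → ℕ → ℝ :=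
  fun _ _ a => if a = 2 then 1 else 0

/-!
With `T₀` the absorption time, `costValue σ 1 = -E^σ_1[T₀]`. The function `w(x) = 2 + 2^x`
(`w 0 = 0`) satisfies the drift inequality `1 + E[w(X_{t+1}) | history] ≤ w(X_t)` off `0` under
every strategy, with equality for action `2`; telescoping gives `E^σ_1[T₀] ≤ w 1 = 4`.
Conversely, taking action `2` for `N` steps and then action `1` forever survives up to time
`t ≤ N` with probability `2^{-t}` and afterwards at the geometric rate `1 - 2^{-(N+1)}`, so its
expected absorption time is `4 - 2^{1-N} → 4`. Under `φ ≡ 2`, `E^φ_1[T₀] = 2`: the surviving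
path `1, 2, 3, …` contributes `∑ 2^{-t} = 2` from below, and the drift inequality for `w = 2`
off `0` gives the bound from above.
-/

open Filter Topology
open scoped ENNReal

lemma Pkernel_nonneg (a x y : ℕ) : 0 ≤ Pkernel a x y := by
  have : (1 / 2 : ℝ) ^ x ≤ 1 := pow_le_one₀ (by norm_num) (by norm_num)
  unfold Pkernel
  split_ifs <;> positivity

lemma trajProb_nonneg {σ : ℕ → List (ℕ × ℕ) → ℕ → ℝ} (hσ : IsStrategy σ) (x₀ : ℕ) :
    ∀ h, 0 ≤ trajProb σ x₀ h
  | [] => zero_le_one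
  | (a, y) :: h => by
    have := (hσ x₀ h).1 a
    have := trajProb_nonneg hσ x₀ h
    have := Pkernel_nonneg a (curState x₀ h) y
    rw [trajProb]
    positivity

def historyConsEquiv (t : ℕ) :
    (ℕ × ℕ) × {h : List (ℕ × ℕ) // h.length = t} ≃ {h : List (ℕ × ℕ) // h.length = t + 1} where
  toFun p := ⟨p.1 :: p.2.1, by simp [p.2.2]⟩
  invFun
    | ⟨p :: h, hl⟩ => (p, ⟨h, Nat.succ_injective hl⟩)
    | ⟨[], hl⟩ => absurd hl (Nat.succ_ne_zero t).symm
  left_inv _ := rfl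
  right_inv
    | ⟨_ :: _, _⟩ => rfl
    | ⟨[], hl⟩ => absurd hl (Nat.succ_ne_zero t).symm

noncomputable def nonzeroIndicator (x : ℕ) : ℝ := if x = 0 then 0 else 1

/-- `E^σ_{x₀}[g(X_t)]`, taken in `ℝ≥0∞` so that no summability has to be established first. -/
noncomputable def expectationAt (σ : ℕ → List (ℕ × ℕ) → ℕ → ℝ) (x₀ t : ℕ) (g : ℕ → ℝ) :
    ℝ≥0∞ :=
  ∑' h : {h : List (ℕ × ℕ) // h.length = t},
    ENNReal.ofReal (trajProb σ x₀ h.1 * g (curState x₀ h.1))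

noncomputable def nextExpectation (σ : ℕ → List (ℕ × ℕ) → ℕ → ℝ) (x₀ : ℕ)
    (h : List (ℕ × ℕ)) (g : ℕ → ℝ) : ℝ≥0∞ :=
  ∑' p : ℕ × ℕ, ENNReal.ofReal (σ x₀ h p.1 * Pkernel p.1 (curState x₀ h) p.2 * g p.2)

noncomputable def expectedTime (σ : ℕ → List (ℕ × ℕ) → ℕ → ℝ) (x₀ : ℕ) : ℝ≥0∞ :=
  ∑' t, expectationAt σ x₀ t nonzeroIndicator

section Expectation

variable {σ : ℕ → List (ℕ × ℕ) → ℕ → ℝ} {x₀ : ℕ}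

lemma expectationAt_zero (g : ℕ → ℝ) : expectationAt σ x₀ 0 g = ENNReal.ofReal (g x₀) := by
  rw [expectationAt, tsum_eq_single (⟨[], rfl⟩ : {h : List (ℕ × ℕ) // h.length = 0})
    fun h hne => (hne (Subtype.ext (List.length_eq_zero_iff.mp h.2))).elim]
  simp [trajProb, curState]

lemma expectationAt_succ (hσ : IsStrategy σ) (t : ℕ) (g : ℕ → ℝ) :
    expectationAt σ x₀ (t + 1) g = ∑' h : {h : List (ℕ × ℕ) // h.length = t},
      ENNReal.ofReal (trajProb σ x₀ h.1) * nextExpectation σ x₀ h.1 g := by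
  rw [expectationAt, ← (historyConsEquiv t).tsum_eq, ENNReal.tsum_prod', ENNReal.tsum_comm]
  refine tsum_congr fun h => ?_
  rw [nextExpectation, ← ENNReal.tsum_mul_left]
  refine tsum_congr fun p => ?_
  rw [← ENNReal.ofReal_mul (trajProb_nonneg hσ x₀ h.1)]
  simp only [historyConsEquiv, Equiv.coe_fn_mk, curState, trajProb]
  ring_nf

lemma pne_eq_toReal_expectationAt (hσ : IsStrategy σ) (t : ℕ) :
    Pne σ x₀ t = (expectationAt σ x₀ t nonzeroIndicator).toReal := by
  rw [expectationAt, ENNReal.tsum_toReal_eq fun _ => ENNReal.ofReal_ne_top, Pne]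
  refine (tsum_subtype {h | h.length = t ∧ curState x₀ h ≠ 0} (trajProb σ x₀)).trans <|
    .trans (tsum_congr fun h => ?_) (tsum_subtype {h | h.length = t} fun h =>
      (ENNReal.ofReal (trajProb σ x₀ h * nonzeroIndicator (curState x₀ h))).toReal).symm
  by_cases hc : curState x₀ h = 0 <;>
    simp [Set.indicator, nonzeroIndicator, hc, trajProb_nonneg hσ]

lemma costValue_eq_neg_toReal_expectedTime (hσ : IsStrategy σ) (hT : expectedTime σ x₀ ≠ ⊤) :
    costValue σ x₀ = -(expectedTime σ x₀).toReal := by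
  rw [costValue, tsum_neg, expectedTime,
    ENNReal.tsum_toReal_eq fun t => ne_top_of_le_ne_top hT (ENNReal.le_tsum t)]
  simp_rw [pne_eq_toReal_expectationAt hσ]

lemma ofReal_trajProb_le_expectationAt {h : List (ℕ × ℕ)} (hx : curState x₀ h ≠ 0) :
    ENNReal.ofReal (trajProb σ x₀ h) ≤ expectationAt σ x₀ h.length nonzeroIndicator :=
  calc ENNReal.ofReal (trajProb σ x₀ h)
      = ENNReal.ofReal (trajProb σ x₀ h * nonzeroIndicator (curState x₀ h)) := by
        simp [nonzeroIndicator, hx]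
    _ ≤ _ := ENNReal.le_tsum (⟨h, rfl⟩ : {h' : List (ℕ × ℕ) // h'.length = h.length})

end Expectation

/-- The drift inequality is `1 + E[w(X_{t+1}) | h] ≤ w(X_t)` written out for this kernel:
the mass sent to the absorbing state contributes nothing since `w 0 = 0`. -/
structure IsHittingSupersolution (σ : ℕ → List (ℕ × ℕ) → ℕ → ℝ) (x₀ : ℕ) (w : ℕ → ℝ) :
    Prop where
  zero : w 0 = 0
  nonneg : ∀ x, 0 ≤ w x
  drift : ∀ h x, x ≠ 0 →
    1 + σ x₀ h 1 * (1 - (1 / 2) ^ x) * w x + σ x₀ h 2 * (1 / 2) * w (x + 1) ≤ w x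

namespace IsHittingSupersolution

variable {σ : ℕ → List (ℕ × ℕ) → ℕ → ℝ} {x₀ : ℕ} {w : ℕ → ℝ}

lemma nextExpectation_eq_zero (hw : IsHittingSupersolution σ x₀ w) {h : List (ℕ × ℕ)}
    (hx : curState x₀ h = 0) : nextExpectation σ x₀ h w = 0 := by
  refine ENNReal.tsum_eq_zero.2 fun ⟨a, y⟩ => ?_
  by_cases hy : y = 0 <;> simp [Pkernel, hx, hy, hw.zero]

lemma nextExpectation_eq (hσ : IsStrategy σ) (hw : IsHittingSupersolution σ x₀ w)
    {h : List (ℕ × ℕ)} (hx : curState x₀ h ≠ 0) :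
    nextExpectation σ x₀ h w
      = ENNReal.ofReal (σ x₀ h 1 * (1 - (1 / 2) ^ curState x₀ h) * w (curState x₀ h))
        + ENNReal.ofReal (σ x₀ h 2 * (1 / 2) * w (curState x₀ h + 1)) := by
  rw [nextExpectation, tsum_eq_sum (s := {(1, curState x₀ h), (2, curState x₀ h + 1)}),
    Finset.sum_pair (by simp)]
  · simp [Pkernel, hx]
  · rintro ⟨a, y⟩ hay
    have hσ0 := (hσ x₀ h).2.2 a
    have := hw.zero
    simp only [Finset.mem_insert, Finset.mem_singleton, Prod.mk.injEq, not_or] at hay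
    by_cases ha1 : a = 1 <;> by_cases ha2 : a = 2 <;> by_cases hy : y = 0 <;> simp_all [Pkernel]

lemma nonzeroIndicator_add_nextExpectation_le (hσ : IsStrategy σ)
    (hw : IsHittingSupersolution σ x₀ w) (h : List (ℕ × ℕ)) :
    ENNReal.ofReal (nonzeroIndicator (curState x₀ h)) + nextExpectation σ x₀ h w
      ≤ ENNReal.ofReal (w (curState x₀ h)) := by
  set x := curState x₀ h with hx_def
  by_cases hx : x = 0
  · simp [nonzeroIndicator, hx, hw.nextExpectation_eq_zero hx]
  have h₁ : 0 ≤ σ x₀ h 1 * (1 - (1 / 2) ^ x) * w x := by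
    have := (hσ x₀ h).1 1
    have := hw.nonneg x
    have : (1 / 2 : ℝ) ^ x ≤ 1 := pow_le_one₀ (by norm_num) (by norm_num)
    positivity
  have h₂ : 0 ≤ σ x₀ h 2 * (1 / 2) * w (x + 1) := by
    have := (hσ x₀ h).1 2
    have := hw.nonneg (x + 1)
    positivity
  rw [hw.nextExpectation_eq hσ hx, nonzeroIndicator, if_neg hx, ← ENNReal.ofReal_add h₁ h₂,
    ← ENNReal.ofReal_add zero_le_one (add_nonneg h₁ h₂), ← add_assoc]
  exact ENNReal.ofReal_le_ofReal (hw.drift h x hx)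

lemma expectationAt_add_expectationAt_succ_le (hσ : IsStrategy σ)
    (hw : IsHittingSupersolution σ x₀ w) (t : ℕ) :
    expectationAt σ x₀ t nonzeroIndicator + expectationAt σ x₀ (t + 1) w
      ≤ expectationAt σ x₀ t w := by
  rw [expectationAt_succ hσ, expectationAt, expectationAt, ← ENNReal.tsum_add]
  refine ENNReal.tsum_le_tsum fun h => ?_
  have hT := trajProb_nonneg hσ x₀ h.1
  rw [ENNReal.ofReal_mul hT, ENNReal.ofReal_mul hT, ← mul_add]
  exact mul_le_mul_right (hw.nonzeroIndicator_add_nextExpectation_le hσ h.1) _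

lemma sum_range_expectationAt_add_le (hσ : IsStrategy σ) (hw : IsHittingSupersolution σ x₀ w) :
    ∀ t, ∑ s ∈ Finset.range t, expectationAt σ x₀ s nonzeroIndicator + expectationAt σ x₀ t w
      ≤ ENNReal.ofReal (w x₀)
  | 0 => by simp [expectationAt_zero]
  | t + 1 => calc
      _ = ∑ s ∈ Finset.range t, expectationAt σ x₀ s nonzeroIndicator
          + (expectationAt σ x₀ t nonzeroIndicator + expectationAt σ x₀ (t + 1) w) := by
        rw [Finset.sum_range_succ, add_assoc]
      _ ≤ _ := by gcongr; exact hw.expectationAt_add_expectationAt_succ_le hσ t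
      _ ≤ _ := hw.sum_range_expectationAt_add_le hσ t

lemma expectedTime_le (hσ : IsStrategy σ) (hw : IsHittingSupersolution σ x₀ w) :
    expectedTime σ x₀ ≤ ENNReal.ofReal (w x₀) :=
  ENNReal.tsum_le_of_sum_range_le fun t =>
    le_self_add.trans (hw.sum_range_expectationAt_add_le hσ t)

end IsHittingSupersolution

noncomputable def markovStrategy (d : ℕ → ℕ) : ℕ → List (ℕ × ℕ) → ℕ → ℝ :=
  fun _ h a => if a = d h.length then 1 else 0

def markovState (d : ℕ → ℕ) (x₀ : ℕ) : ℕ → ℕ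
  | 0 => x₀
  | t + 1 => if d t = 2 then markovState d x₀ t + 1 else markovState d x₀ t

def survivingHistory (d : ℕ → ℕ) (x₀ : ℕ) : ℕ → List (ℕ × ℕ)
  | 0 => []
  | t + 1 => (d t, markovState d x₀ (t + 1)) :: survivingHistory d x₀ t

section MarkovStrategy

variable {d : ℕ → ℕ} {x₀ : ℕ}

lemma isStrategy_markovStrategy (hd : ∀ t, d t = 1 ∨ d t = 2) :
    IsStrategy (markovStrategy d) := by
  intro _ h
  refine ⟨fun a => by unfold markovStrategy; split_ifs <;> norm_num, ?_⟩
  rcases hd h.length with hd | hd <;> simp +contextual [markovStrategy, hd]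

lemma le_markovState : ∀ t, x₀ ≤ markovState d x₀ t
  | 0 => le_rfl
  | t + 1 => by have := le_markovState t; simp only [markovState]; split_ifs <;> omega

@[simp] lemma length_survivingHistory : ∀ t, (survivingHistory d x₀ t).length = t
  | 0 => rfl
  | t + 1 => by simp [survivingHistory, length_survivingHistory t]

@[simp] lemma curState_survivingHistory :
    ∀ t, curState x₀ (survivingHistory d x₀ t) = markovState d x₀ t
  | 0 => rfl
  | _ + 1 => rfl

lemma trajProb_survivingHistory_succ (hd : ∀ t, d t = 1 ∨ d t = 2) (hx₀ : x₀ ≠ 0) (t : ℕ) :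
    trajProb (markovStrategy d) x₀ (survivingHistory d x₀ (t + 1))
      = trajProb (markovStrategy d) x₀ (survivingHistory d x₀ t)
        * if d t = 2 then 1 / 2 else 1 - (1 / 2) ^ markovState d x₀ t := by
  have hx : markovState d x₀ t ≠ 0 := (Nat.pos_of_ne_zero hx₀).trans_le (le_markovState t) |>.ne'
  rcases hd t with hd | hd <;>
    simp [survivingHistory, trajProb, markovStrategy, markovState, Pkernel, hd, hx]

lemma tsum_ofReal_trajProb_survivingHistory_le (hx₀ : x₀ ≠ 0) :
    ∑' t, ENNReal.ofReal (trajProb (markovStrategy d) x₀ (survivingHistory d x₀ t))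
      ≤ expectedTime (markovStrategy d) x₀ := by
  refine ENNReal.tsum_le_tsum fun t => ?_
  have hx : curState x₀ (survivingHistory d x₀ t) ≠ 0 := by
    have := le_markovState (d := d) (x₀ := x₀) t
    simp only [curState_survivingHistory]
    omega
  simpa using ofReal_trajProb_le_expectationAt (σ := markovStrategy d) hx

end MarkovStrategy

section LowerBound

variable {σ : ℕ → List (ℕ × ℕ) → ℕ → ℝ}

/-- `w(x) = 2 + 2^x` is the optimal expected absorption time `w*(x)`. -/
lemma isHittingSupersolution_two_add_two_pow (hσ : IsStrategy σ) (x₀ : ℕ) :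
    IsHittingSupersolution σ x₀ fun x => if x = 0 then 0 else 2 + 2 ^ x where
  zero := if_pos rfl
  nonneg x := by split_ifs <;> positivity
  drift h x hx := by
    obtain ⟨hnonneg, hsum, -⟩ := hσ x₀ h
    have hpow : (1 / 2 : ℝ) ^ x * 2 ^ x = 1 := by rw [← mul_pow]; norm_num
    have := mul_nonneg (hnonneg 1) (pow_nonneg (by norm_num : (0 : ℝ) ≤ 1 / 2) x)
    simp only [hx, if_false, Nat.add_one_ne_zero]
    linear_combination (-σ x₀ h 1) * hpow + (1 + 2 ^ x) * hsum + 2 * this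

lemma expectedTime_le_four (hσ : IsStrategy σ) : expectedTime σ 1 ≤ 4 := by
  refine ((isHittingSupersolution_two_add_two_pow hσ 1).expectedTime_le hσ).trans_eq ?_
  norm_num

lemma neg_four_le_costValue (hσ : IsStrategy σ) : -4 ≤ costValue σ 1 := by
  have hT := expectedTime_le_four hσ
  rw [costValue_eq_neg_toReal_expectedTime hσ (ne_top_of_le_ne_top (by simp) hT), neg_le_neg_iff]
  exact ENNReal.toReal_le_of_le_ofReal (by norm_num) (by simpa using hT)

end LowerBound

section Sigma2

lemma markovStrategy_const_two : markovStrategy (fun _ => 2) = sigma2 := rfl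

lemma isStrategy_sigma2 : IsStrategy sigma2 :=
  isStrategy_markovStrategy (d := fun _ => 2) fun _ => .inr rfl

lemma isHittingSupersolution_sigma2 (x₀ : ℕ) :
    IsHittingSupersolution sigma2 x₀ fun x => if x = 0 then 0 else 2 where
  zero := if_pos rfl
  nonneg x := by split_ifs <;> norm_num
  drift h x hx := by norm_num [sigma2, hx]

lemma trajProb_sigma2_survivingHistory (t : ℕ) :
    trajProb sigma2 1 (survivingHistory (fun _ => 2) 1 t) = (1 / 2) ^ t := by
  induction t with
  | zero => rfl
  | succ t ih =>
    rw [← markovStrategy_const_two, trajProb_survivingHistory_succ (fun _ => .inr rfl) one_ne_zero,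
      markovStrategy_const_two, ih, if_pos rfl, pow_succ]

lemma expectedTime_sigma2 : expectedTime sigma2 1 = 2 := by
  have hle := (isHittingSupersolution_sigma2 1).expectedTime_le isStrategy_sigma2
  refine le_antisymm (by simpa using hle) ?_
  calc (2 : ℝ≥0∞) = ∑' t : ℕ, ENNReal.ofReal ((1 / 2) ^ t) := by
        rw [← ENNReal.ofReal_tsum_of_nonneg (fun _ => by positivity) summable_geometric_two,
          tsum_geometric_two, ENNReal.ofReal_ofNat]
    _ ≤ _ := by
      simp_rw [← trajProb_sigma2_survivingHistory, ← markovStrategy_const_two]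
      exact tsum_ofReal_trajProb_survivingHistory_le one_ne_zero

lemma costValue_sigma2 : costValue sigma2 1 = -2 := by
  rw [costValue_eq_neg_toReal_expectedTime isStrategy_sigma2 (by simp [expectedTime_sigma2]),
    expectedTime_sigma2, ENNReal.toReal_ofNat]

end Sigma2

def advanceThenHold (N t : ℕ) : ℕ := if t < N then 2 else 1

section AdvanceThenHold

variable (N : ℕ)

lemma advanceThenHold_mem (t : ℕ) : advanceThenHold N t = 1 ∨ advanceThenHold N t = 2 := by
  unfold advanceThenHold; split_ifs <;> simp

lemma advanceThenHold_of_lt {t : ℕ} (ht : t < N) : advanceThenHold N t = 2 := if_pos ht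

lemma advanceThenHold_of_le {t : ℕ} (ht : N ≤ t) : advanceThenHold N t = 1 := if_neg ht.not_gt

lemma markovState_advanceThenHold : ∀ t, markovState (advanceThenHold N) 1 t = min t N + 1
  | 0 => by simp [markovState]
  | t + 1 => by
    rw [markovState, markovState_advanceThenHold t, advanceThenHold]
    split_ifs <;> omega

lemma trajProb_advanceThenHold_of_le {t : ℕ} (ht : t ≤ N) :
    trajProb (markovStrategy (advanceThenHold N)) 1 (survivingHistory (advanceThenHold N) 1 t)
      = (1 / 2) ^ t := by
  induction t with
  | zero => rfl
  | succ t ih =>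
    rw [trajProb_survivingHistory_succ (advanceThenHold_mem N) one_ne_zero, ih (by omega),
      advanceThenHold_of_lt N (by omega), if_pos rfl, pow_succ]

lemma trajProb_advanceThenHold_add (k : ℕ) :
    trajProb (markovStrategy (advanceThenHold N)) 1
        (survivingHistory (advanceThenHold N) 1 (k + N))
      = (1 / 2) ^ N * (1 - (1 / 2) ^ (N + 1)) ^ k := by
  induction k with
  | zero => simp [trajProb_advanceThenHold_of_le N le_rfl]
  | succ k ih =>
    rw [add_right_comm, trajProb_survivingHistory_succ (advanceThenHold_mem N) one_ne_zero, ih,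
      advanceThenHold_of_le N (by omega), if_neg (by decide), markovState_advanceThenHold,
      min_eq_right (by omega)]
    ring

lemma hasSum_trajProb_advanceThenHold :
    HasSum (fun t => trajProb (markovStrategy (advanceThenHold N)) 1
      (survivingHistory (advanceThenHold N) 1 t)) (4 - 2 * (1 / 2) ^ N) := by
  have hr : (1 : ℝ) - (1 / 2) ^ (N + 1) < 1 := by simp
  have htail := (hasSum_geometric_of_lt_one
    (sub_nonneg.2 (pow_le_one₀ (by norm_num) (by norm_num))) hr).mul_left ((1 / 2 : ℝ) ^ N)
  refine (hasSum_nat_add_iff' N).1 ?_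
  simp_rw [trajProb_advanceThenHold_add, Finset.sum_congr rfl fun t ht =>
    trajProb_advanceThenHold_of_le N (Finset.mem_range.1 ht).le,
    geom_sum_eq (by norm_num : (1 / 2 : ℝ) ≠ 1)]
  rwa [show (4 : ℝ) - 2 * (1 / 2) ^ N - ((1 / 2) ^ N - 1) / (1 / 2 - 1)
      = (1 / 2) ^ N * (1 - (1 - (1 / 2) ^ (N + 1)))⁻¹ by field_simp; ring]

lemma costValue_advanceThenHold_le :
    costValue (markovStrategy (advanceThenHold N)) 1 ≤ -4 + 2 * (1 / 2) ^ N := by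
  have hσ := isStrategy_markovStrategy (advanceThenHold_mem N)
  have hT := ne_top_of_le_ne_top (by simp) (expectedTime_le_four hσ)
  have hlow := tsum_ofReal_trajProb_survivingHistory_le (d := advanceThenHold N) one_ne_zero
  rw [← ENNReal.ofReal_tsum_of_nonneg (fun _ => trajProb_nonneg hσ 1 _)
    (hasSum_trajProb_advanceThenHold N).summable,
    (hasSum_trajProb_advanceThenHold N).tsum_eq, ENNReal.ofReal_le_iff_le_toReal hT] at hlow
  rw [costValue_eq_neg_toReal_expectedTime hσ hT]
  linarith

end AdvanceThenHold

/-- In the MDP of Example 5.1 with cost `c(x,a) = -1` for `x ≥ 1` and `c(0,a) = 0`, the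
optimal value is `v*(1) = -4`, but the stationary strategy `φ(x) ≡ 2` achieves only
`v^φ(1) = -∑_{t=0}^∞ (1/2)^t = -2`. -/
theorem no_optimal_value_attained_by_phi2 :
    (⨅ σ : {σ : ℕ → List (ℕ × ℕ) → ℕ → ℝ // IsStrategy σ}, costValue σ.1 1) = -4
      ∧ costValue sigma2 1 = -∑' t : ℕ, (1/2 : ℝ)^t
      ∧ costValue sigma2 1 = -2 := by
  refine ⟨?_, by rw [costValue_sigma2, tsum_geometric_two], costValue_sigma2⟩
  have : Nonempty {σ : ℕ → List (ℕ × ℕ) → ℕ → ℝ // IsStrategy σ} := ⟨⟨sigma2, isStrategy_sigma2⟩⟩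
  have hbdd : BddBelow (Set.range fun σ : {σ // IsStrategy σ} => costValue σ.1 1) :=
    ⟨-4, Set.forall_mem_range.2 fun σ => neg_four_le_costValue σ.2⟩
  refine le_antisymm ?_ (le_ciInf fun σ => neg_four_le_costValue σ.2)
  have hlim : Tendsto (fun N : ℕ => -4 + 2 * (1 / 2 : ℝ) ^ N) atTop (𝓝 (-4)) := by
    simpa using (tendsto_pow_atTop_nhds_zero_of_lt_one (by norm_num : (0 : ℝ) ≤ 1 / 2)
      (by norm_num)).const_mul 2 |>.const_add (-4)
  exact ge_of_tendsto' hlim fun N =>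
    (ciInf_le hbdd ⟨_, isStrategy_markovStrategy (advanceThenHold_mem N)⟩).trans
      (costValue_advanceThenHold_le N)
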